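/- arXiv:2507.02466 — 2 statements merged into one kernel-verified Lean document; each statement's English description precedes it below -/
import Mathlib

section
/- Let a = t_1 < t_2 < ⋯ < t_{n+1} = b be a partition of [a,b], let f : [a,b] → ℝ, and let f_n be the continuous piecewise-linear interpolant of f on this partition (f_n(t) = f(t_k) + (t − t_k)·(f(t_{k+1}) − f(t_k))/(t_{k+1} − t_k) for t ∈ [t_k, t_{k+1}]). Let g(t) = max{0, t} denote the ReLU function. Then for all t ∈ [a,b], f_n(t) = f(t_1) + ∑_{k=1}^{n} [g(t − t_k) − g(t − t_{k+1})] · (f(t_{k+1}) − f(t_k))/(t_{k+1} − t_k). In particular, every continuous piecewise-linear function on [a,b] is an affine combination of ReLU functions. -/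
open Set Finset

/-- The continuous piecewise-linear interpolant of `f` on a partition
`a = t 1 < t 2 < ⋯ < t (n+1) = b` equals, on all of `[a,b]`, an affine combination of
translated ReLU functions `g(t) = max 0 t`:
`f_n x = f (t 1) + ∑_{k=1}^n [g(x - t k) - g(x - t (k+1))] · (f (t (k+1)) - f (t k))/(t (k+1) - t k)`. -/
theorem piecewiseLinear_eq_relu_combination
    (n : ℕ) (hn : 1 ≤ n) (a b : ℝ) (t : ℕ → ℝ) (f fn : ℝ → ℝ)
    (ht : ∀ k : ℕ, 1 ≤ k → k ≤ n → t k < t (k + 1))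
    (ha : t 1 = a) (hb : t (n + 1) = b)
    (hfn : ∀ k : ℕ, 1 ≤ k → k ≤ n → ∀ x ∈ Icc (t k) (t (k + 1)),
      fn x = f (t k) + (x - t k) * (f (t (k + 1)) - f (t k)) / (t (k + 1) - t k)) :
    ∀ x ∈ Icc a b,
      fn x = f (t 1) + ∑ k ∈ Finset.Icc 1 n,
        (max 0 (x - t k) - max 0 (x - t (k + 1))) *
          ((f (t (k + 1)) - f (t k)) / (t (k + 1) - t k)) := by
  -- monotonicity of t on [1, n+1]
  have hmono : ∀ i j : ℕ, 1 ≤ i → i ≤ j → j ≤ n + 1 → t i ≤ t j := by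
    intro i j hi hij hjn
    induction j with
    | zero => omega
    | succ m ih =>
      rcases Nat.eq_or_lt_of_le hij with h | h
      · rw [h]
      · have hm : i ≤ m := by omega
        have h1 : 1 ≤ m := by omega
        have := ht m h1 (by omega)
        have := ih hm (by omega)
        linarith
  intro x hx
  rw [← ha, ← hb] at hx
  -- find the interval containing x
  set S : Finset ℕ := (Finset.Icc 1 n).filter (fun k => t k ≤ x) with hS
  have hSne : S.Nonempty := ⟨1, by simp [hS, hn, hx.1]⟩
  set j := S.max' hSne with hj
  have hjS : j ∈ S := S.max'_mem hSne
  have hj1 : 1 ≤ j := (Finset.mem_Icc.1 (Finset.mem_filter.1 hjS).1).1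
  have hjn : j ≤ n := (Finset.mem_Icc.1 (Finset.mem_filter.1 hjS).1).2
  have hx1 : t j ≤ x := (Finset.mem_filter.1 hjS).2
  have hx2 : x ≤ t (j + 1) := by
    rcases Nat.eq_or_lt_of_le hjn with h | h
    · exact h ▸ hx.2
    · by_contra hc
      push_neg at hc
      have : j + 1 ∈ S := Finset.mem_filter.2 ⟨Finset.mem_Icc.2 ⟨by omega, by omega⟩, hc.le⟩
      have := S.le_max' _ this
      omega
  -- value of fn at x
  have hfnx := hfn j hj1 hjn x ⟨hx1, hx2⟩
  -- compute each term of the sum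
  have hterm : ∀ k ∈ Finset.Icc 1 n,
      (max 0 (x - t k) - max 0 (x - t (k + 1))) *
        ((f (t (k + 1)) - f (t k)) / (t (k + 1) - t k)) =
      if k < j then f (t (k + 1)) - f (t k)
      else if k = j then (x - t j) * (f (t (j + 1)) - f (t j)) / (t (j + 1) - t j)
      else 0 := by
    intro k hk
    rw [Finset.mem_Icc] at hk
    have hne : t (k + 1) - t k ≠ 0 := by
      have := ht k hk.1 hk.2; linarith
    rcases lt_trichotomy k j with h | h | h
    · have h1 : t (k + 1) ≤ x := le_trans (hmono (k + 1) j (by omega) (by omega) (by omega)) hx1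
      have h2 : t k ≤ x := le_trans (hmono k j hk.1 (by omega) (by omega)) hx1
      rw [if_pos h]
      rw [max_eq_right (by linarith), max_eq_right (by linarith)]
      field_simp
      ring
    · subst h
      rw [if_neg (lt_irrefl _), if_pos rfl]
      rw [max_eq_right (by linarith), max_eq_left (by linarith)]
      ring
    · have h1 : t (j + 1) ≤ t k := hmono (j + 1) k (by omega) (by omega) (by omega)
      have h2 : t (j + 1) ≤ t (k + 1) := hmono (j + 1) (k + 1) (by omega) (by omega) (by omega)
      rw [if_neg (by omega), if_neg (by omega)]
      rw [max_eq_left (by linarith), max_eq_left (by linarith)]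
      ring
  have hsum0 := Finset.sum_congr rfl hterm
  -- split the sum
  have hsplit : Finset.Icc 1 n = Finset.Ico 1 j ∪ Finset.Ico j (n + 1) := by
    ext k
    simp only [Finset.mem_Icc, Finset.mem_union, Finset.mem_Ico]
    omega
  have h1 : ∑ k ∈ Finset.Ico 1 j, (if k < j then f (t (k + 1)) - f (t k)
      else if k = j then (x - t j) * (f (t (j + 1)) - f (t j)) / (t (j + 1) - t j)
      else 0) = f (t j) - f (t 1) := by
    rw [Finset.sum_congr rfl (fun k hk => if_pos (Finset.mem_Ico.1 hk).2)]
    rw [Finset.sum_Ico_eq_sum_range]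
    have : ∀ i ∈ Finset.range (j - 1), f (t (1 + i + 1)) - f (t (1 + i)) =
        f (t (i + 1 + 1)) - f (t (i + 1)) := by intro i _; ring_nf
    rw [Finset.sum_congr rfl this, Finset.sum_range_sub (fun i => f (t (i + 1)))]
    have hjj : j - 1 + 1 = j := by omega
    norm_num [hjj]
  have h2 : ∑ k ∈ Finset.Ico j (n + 1), (if k < j then f (t (k + 1)) - f (t k)
      else if k = j then (x - t j) * (f (t (j + 1)) - f (t j)) / (t (j + 1) - t j)
      else 0) = (x - t j) * (f (t (j + 1)) - f (t j)) / (t (j + 1) - t j) := by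
    rw [Finset.sum_eq_single j]
    · rw [if_neg (lt_irrefl _), if_pos rfl]
    · intro k hk hkj
      rw [Finset.mem_Ico] at hk
      rw [if_neg (by omega), if_neg hkj]
    · intro h
      exact absurd (Finset.mem_Ico.2 ⟨le_refl j, by omega⟩) h
  have hsum1 : (∑ k ∈ Finset.Icc 1 n, (if k < j then f (t (k + 1)) - f (t k)
      else if k = j then (x - t j) * (f (t (j + 1)) - f (t j)) / (t (j + 1) - t j)
      else 0)) = f (t j) - f (t 1) + (x - t j) * (f (t (j + 1)) - f (t j)) / (t (j + 1) - t j) := by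
    rw [hsplit, Finset.sum_union (Finset.Ico_disjoint_Ico_consecutive 1 j (n + 1)), h1, h2]
  rw [hfnx, hsum0, hsum1]
  ring
end

section
/- Let f : [-1,1] → ℝ be uniformly continuous and let g(t) = max{0, t} be the ReLU function. Then f is the uniform limit on [-1,1] of a sequence of finite linear combinations of translated ReLU functions plus constants: for every ε > 0 there exist n ∈ ℕ, real coefficients c_0, c_1, …, c_n, and real shifts s_1, …, s_n such that sup_{t ∈ [-1,1]} |f(t) − (c_0 + ∑_{k=1}^n c_k g(t − s_k))| ≤ ε. -/
open Set Finset

set_option maxHeartbeats 2000000 in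
/-- Any function uniformly continuous on `[-1,1]` is the uniform limit on `[-1,1]` of
finite linear combinations of translated ReLU functions `g(t) = max 0 t` plus constants. -/
theorem uniformly_continuous_relu_approx (f : ℝ → ℝ)
    (hf : ∀ ε > 0, ∃ δ > 0, ∀ x ∈ Icc (-1 : ℝ) 1, ∀ y ∈ Icc (-1 : ℝ) 1,
      |x - y| < δ → |f x - f y| < ε) :
    ∀ ε > 0, ∃ (n : ℕ) (c : ℕ → ℝ) (s : ℕ → ℝ),
      ∀ t ∈ Icc (-1 : ℝ) 1,
        |f t - (c 0 + ∑ k ∈ Finset.Icc 1 n, c k * max 0 (t - s k))| ≤ ε := by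
  intro ε hε
  obtain ⟨δ, hδ, H⟩ := hf ε hε
  obtain ⟨n₀, hn₀⟩ := exists_nat_gt (2 / δ)
  set n : ℕ := n₀ + 1 with hn
  have hnpos : (0:ℝ) < n := by positivity
  set h : ℝ := 2 / n with hh
  have hhpos : 0 < h := by positivity
  have hne : h ≠ 0 := ne_of_gt hhpos
  have hnh : (n:ℝ) * h = 2 := by rw [hh]; field_simp [hnpos.ne']
  have hhδ : h < δ := by
    rw [hh, div_lt_iff₀ hnpos]
    have h2δ : 2 / δ < (n:ℝ) := by
      calc (2/δ) < n₀ := hn₀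
      _ ≤ n := by exact_mod_cast Nat.le_succ n₀
    calc (2:ℝ) = (2/δ) * δ := by field_simp
    _ < n * δ := by exact mul_lt_mul_of_pos_right h2δ hδ
    _ = δ * n := mul_comm _ _
  set T : ℕ → ℝ := fun k => -1 + k * h with hT
  have hTmono : ∀ a b : ℕ, a ≤ b → T a ≤ T b := by
    intro a b hab
    have : (a:ℝ) ≤ b := by exact_mod_cast hab
    simp only [hT]
    nlinarith
  set m : ℕ → ℝ := fun k => (f (T k) - f (T (k-1))) / h with hm
  set c : ℕ → ℝ := fun k => if k = 0 then f (T 0) else m k - m (k-1) with hc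
  set s : ℕ → ℝ := fun k => T (k-1) with hs
  have key : ∀ t : ℝ, ∀ J : ℕ,
      ∑ k ∈ Finset.Ioc 0 J, c k * (t - s k)
        = m J * (t - T (J-1)) + (f (T (J-1)) - f (T 0)) := by
    intro t J
    induction J with
    | zero => simp [hm]
    | succ J ih =>
      rw [Finset.sum_Ioc_succ_top (Nat.zero_le _), ih]
      have hcs : c (J+1) = m (J+1) - m J := by simp [hc]
      have hss : s (J+1) = T J := by simp [hs]
      rw [hcs, hss]
      have hkey : m J * (T J - T (J-1)) = f (T J) - f (T (J-1)) := by
        cases J with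
        | zero => simp [hm]
        | succ J' =>
          have hT' : T (J'+1) - T (J'+1-1) = h := by
            simp only [hT, Nat.succ_sub_one]
            push_cast
            ring
          rw [hm, hT', div_mul_cancel₀ _ hne]
      simp only [Nat.add_sub_cancel]
      linear_combination hkey
  refine ⟨n, c, s, ?_⟩
  intro t ht
  obtain ⟨ht1, ht2⟩ := ht
  set u : ℝ := (t+1)/h with hu
  have hu0 : 0 ≤ u := div_nonneg (by linarith) hhpos.le
  have huh : u * h = t + 1 := by rw [hu, div_mul_cancel₀ _ hne]
  have hun : u ≤ n := by
    rw [hu, div_le_iff₀ hhpos]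
    linarith [hnh]
  set j : ℕ := min n (⌊u⌋₊ + 1) with hj
  have hj1 : 1 ≤ j := le_min (Nat.succ_le_succ (Nat.zero_le _)) (Nat.succ_le_succ (Nat.zero_le _))
  have hjn : j ≤ n := min_le_left _ _
  have hja : ((j:ℝ) - 1) ≤ u := by
    have h1 : j - 1 ≤ ⌊u⌋₊ := by
      have := min_le_right n (⌊u⌋₊ + 1)
      omega
    have h2 : ((j-1:ℕ):ℝ) ≤ (⌊u⌋₊:ℝ) := Nat.cast_le.mpr h1
    have h3 : ((j-1:ℕ):ℝ) = (j:ℝ) - 1 := by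
      rw [Nat.cast_sub hj1]; norm_num
    have h4 := Nat.floor_le hu0
    linarith
  have hjb : u ≤ (j:ℝ) := by
    have h2 : u ≤ ((⌊u⌋₊+1:ℕ):ℝ) := by
      push_cast
      exact (Nat.lt_floor_add_one u).le
    rcases le_total n (⌊u⌋₊+1) with hcmp | hcmp
    · rw [hj, min_eq_left hcmp]; exact hun
    · rw [hj, min_eq_right hcmp]; exact h2
  have hcast : ((j-1:ℕ):ℝ) = (j:ℝ) - 1 := by
    rw [Nat.cast_sub hj1]; norm_num
  have ha : T (j-1) ≤ t := by
    have : ((j:ℝ) - 1) * h ≤ u * h := mul_le_mul_of_nonneg_right hja hhpos.le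
    simp only [hT, hcast]
    linarith [huh]
  have hb : t ≤ T j := by
    have : u * h ≤ (j:ℝ) * h := mul_le_mul_of_nonneg_right hjb hhpos.le
    simp only [hT]
    linarith [huh]
  have hIcc : Finset.Icc 1 n = Finset.Ioc 0 n := rfl
  have hsplit : ∑ k ∈ Finset.Ioc 0 n, c k * max 0 (t - s k)
      = ∑ k ∈ Finset.Ioc 0 j, c k * max 0 (t - s k)
        + ∑ k ∈ Finset.Ioc j n, c k * max 0 (t - s k) :=
    (Finset.sum_Ioc_consecutive _ (Nat.zero_le j) hjn).symm
  have hzero : ∑ k ∈ Finset.Ioc j n, c k * max 0 (t - s k) = 0 := by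
    apply Finset.sum_eq_zero
    intro k hk
    obtain ⟨hk1, hk2⟩ := Finset.mem_Ioc.mp hk
    have : T j ≤ s k := by
      simp only [hs]
      exact hTmono _ _ (by omega)
    have : t - s k ≤ 0 := by linarith
    rw [max_eq_left this]
    ring
  have hone : ∑ k ∈ Finset.Ioc 0 j, c k * max 0 (t - s k)
      = ∑ k ∈ Finset.Ioc 0 j, c k * (t - s k) := by
    apply Finset.sum_congr rfl
    intro k hk
    obtain ⟨hk1, hk2⟩ := Finset.mem_Ioc.mp hk
    have hsk : s k ≤ T (j-1) := by
      simp only [hs]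
      exact hTmono _ _ (by omega)
    have : 0 ≤ t - s k := by linarith
    rw [max_eq_right this]
  rw [hIcc, hsplit, hzero, hone, key t j, add_zero]
  have hc0 : c 0 = f (T 0) := by simp [hc]
  set a : ℝ := T (j-1) with hA
  set b : ℝ := T j with hB
  have hba : b - a = h := by
    simp only [hA, hB, hT, hcast]
    ring
  have haI : a ∈ Icc (-1:ℝ) 1 := by
    have h1 : (0:ℝ) ≤ ((j-1:ℕ):ℝ) := Nat.cast_nonneg _
    have h2 : ((j-1:ℕ):ℝ) ≤ n := Nat.cast_le.mpr (by omega)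
    have h3 : (0:ℝ) ≤ ((j-1:ℕ):ℝ) * h := mul_nonneg h1 hhpos.le
    have h4 : ((j-1:ℕ):ℝ) * h ≤ (n:ℝ) * h := mul_le_mul_of_nonneg_right h2 hhpos.le
    constructor
    · simp only [hA, hT]; linarith
    · simp only [hA, hT]; linarith [hnh]
  have hbI : b ∈ Icc (-1:ℝ) 1 := by
    have h1 : (0:ℝ) ≤ (j:ℝ) := Nat.cast_nonneg _
    have h2 : ((j:ℕ):ℝ) ≤ n := Nat.cast_le.mpr hjn
    have h3 : (0:ℝ) ≤ ((j:ℕ):ℝ) * h := mul_nonneg h1 hhpos.le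
    have h4 : ((j:ℕ):ℝ) * h ≤ (n:ℝ) * h := mul_le_mul_of_nonneg_right h2 hhpos.le
    constructor
    · simp only [hB, hT]; linarith
    · simp only [hB, hT]; linarith [hnh]
  have hfa : |f t - f a| < ε := by
    apply H t ⟨ht1, ht2⟩ a haI
    rw [abs_of_nonneg (by linarith)]
    linarith
  have hfb : |f t - f b| < ε := by
    apply H t ⟨ht1, ht2⟩ b hbI
    rw [abs_of_nonpos (by linarith)]
    linarith
  have hmj : m j = (f b - f a) / h := by simp [hm, hA, hB]
  set lam : ℝ := (t - a) / h with hlam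
  have hl0 : 0 ≤ lam := div_nonneg (by linarith) hhpos.le
  have hl1 : lam ≤ 1 := by
    rw [hlam, div_le_one hhpos]
    linarith
  have hexpand : f t - (c 0 + (m j * (t - a) + (f a - f (T 0))))
      = (1 - lam) * (f t - f a) + lam * (f t - f b) := by
    rw [hc0, hmj, hlam]
    field_simp
    ring
  rw [hexpand]
  have h1 := abs_add_le ((1-lam)*(f t - f a)) (lam*(f t - f b))
  rw [abs_mul, abs_mul, abs_of_nonneg hl0, abs_of_nonneg (by linarith : (0:ℝ) ≤ 1 - lam)] at h1
  nlinarith [abs_nonneg (f t - f a), abs_nonneg (f t - f b)]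
end
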